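/- arXiv:2502.13711 — 2 statements merged into one kernel-verified Lean document; each statement's English description precedes it below -/
import Mathlib

section
/- Let ν > 0, h > 0, δ ≥ 0. Suppose Y is a random variable with the noncentral chi-square distribution with ν degrees of freedom and noncentrality δ, and conditionally on Y = y, X has the noncentral chi-square distribution with ν degrees of freedom and noncentrality y·h. Then X/(1+h) has the noncentral chi-square distribution with ν degrees of freedom and noncentrality hδ/(1+h). -/
/-!
Compare moment generating functions. Given `Y = y ≥ 0`, the MGF of `X` at `s` is
`(1 - 2s)^{-ν/2} exp (u y)` with `u = h s / (1 - 2s)`, so averaging over `Y` gives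
`(1 - 2s)^{-ν/2} M_Y(u)`. Since `(1 - 2s)(1 - 2u) = 1 - 2(1 + h)s`, this is the MGF of `(1 + h)`
times a `χ²_ν(hδ/(1+h))` variable. The MGFs are handled as lower Lebesgue integrals, so no
integrability of the mixture has to be checked. `Y ≥ 0` a.s. follows from a Chernoff bound,
since `M_Y ≤ 1` on `(-∞, 0)`.
-/

open MeasureTheory ProbabilityTheory

/-- A measure on `ℝ` is the noncentral chi-square distribution with `ν` degrees of freedom
and noncentrality `δ` if it is a probability measure whose moment generating function is
`(1 - 2t)^{-ν/2} exp(δ t / (1 - 2t))` for `t < 1/2`. -/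
def IsNoncentralChiSq (μ : Measure ℝ) (ν δ : ℝ) : Prop :=
  IsProbabilityMeasure μ ∧ ∀ t : ℝ, t < 1 / 2 →
    ∫ x, Real.exp (t * x) ∂μ
      = (1 - 2 * t) ^ (-ν / 2) * Real.exp (δ * t / (1 - 2 * t))

open Real Filter Topology ENNReal

lemma measure_Iic_neg_eq_zero_of_integral_exp_mul_le {μ : Measure ℝ} [IsFiniteMeasure μ] {C : ℝ}
    (hint : ∀ t < 0, Integrable (fun x => exp (t * x)) μ)
    (hC : ∀ t < 0, ∫ x, exp (t * x) ∂μ ≤ C) {ε : ℝ} (hε : 0 < ε) :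
    μ (Set.Iic (-ε)) = 0 := by
  have hchernoff : ∀ t < 0, μ.real (Set.Iic (-ε)) ≤ exp (t * ε) * C := fun t ht =>
    calc μ.real (Set.Iic (-ε)) ≤ exp (-t * -ε) * mgf id μ t :=
          measure_le_le_exp_mul_mgf (-ε) ht.le (hint t ht)
      _ ≤ exp (t * ε) * C := by
          rw [neg_mul_neg]
          exact mul_le_mul_of_nonneg_left (hC t ht) (exp_pos _).le
  have hlim : Tendsto (fun t => exp (t * ε) * C) atBot (𝓝 0) := by
    simpa using (tendsto_exp_atBot.comp (tendsto_id.atBot_mul_const hε)).mul_const C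
  have hreal : μ.real (Set.Iic (-ε)) ≤ 0 :=
    ge_of_tendsto hlim ((eventually_lt_atBot 0).mono hchernoff)
  exact (measureReal_eq_zero_iff).1 (le_antisymm hreal measureReal_nonneg)

lemma ae_nonneg_of_integral_exp_mul_le {μ : Measure ℝ} [IsFiniteMeasure μ] {C : ℝ}
    (hint : ∀ t < 0, Integrable (fun x => exp (t * x)) μ)
    (hC : ∀ t < 0, ∫ x, exp (t * x) ∂μ ≤ C) :
    ∀ᵐ x ∂μ, 0 ≤ x := by
  have hgt : ∀ n : ℕ, ∀ᵐ x ∂μ, -(1 / (n + 1 : ℝ)) < x := fun n =>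
    measure_eq_zero_iff_ae_notMem.1
      (measure_Iic_neg_eq_zero_of_integral_exp_mul_le hint hC (by positivity)) |>.mono
      fun x hx => not_le.1 hx
  filter_upwards [ae_all_iff.2 hgt] with x hx
  by_contra! hneg
  obtain ⟨n, hn⟩ := exists_nat_one_div_lt (neg_pos.2 hneg)
  linarith [hx n]

namespace IsNoncentralChiSq

variable {μ : Measure ℝ} {ν δ : ℝ}

lemma integrable_exp_mul (hμ : IsNoncentralChiSq μ ν δ) {t : ℝ} (ht : t < 1 / 2) :
    Integrable (fun x => exp (t * x)) μ :=
  .of_integral_ne_zero <| by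
    rw [hμ.2 t ht]
    have : 0 < 1 - 2 * t := by linarith
    positivity

lemma integral_exp_mul_le_one (hμ : IsNoncentralChiSq μ ν δ) (hν : 0 ≤ ν) (hδ : 0 ≤ δ)
    {t : ℝ} (ht : t < 0) : ∫ x, exp (t * x) ∂μ ≤ 1 := by
  rw [hμ.2 t (by linarith)]
  have hpow : (1 - 2 * t) ^ (-ν / 2) ≤ 1 :=
    rpow_le_one_of_one_le_of_nonpos (by linarith) (by linarith)
  have hexp : exp (δ * t / (1 - 2 * t)) ≤ 1 :=
    exp_le_one_iff.2 (div_nonpos_of_nonpos_of_nonneg (mul_nonpos_of_nonneg_of_nonpos hδ ht.le)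
      (by linarith))
  exact mul_le_one₀ hpow (exp_pos _).le hexp

lemma ae_nonneg (hμ : IsNoncentralChiSq μ ν δ) (hν : 0 ≤ ν) (hδ : 0 ≤ δ) : ∀ᵐ x ∂μ, 0 ≤ x :=
  haveI := hμ.1
  ae_nonneg_of_integral_exp_mul_le (fun t ht => hμ.integrable_exp_mul (by linarith))
    (fun t ht => hμ.integral_exp_mul_le_one hν hδ ht)

end IsNoncentralChiSq

lemma isNoncentralChiSq_iff_lintegral_exp_mul {μ : Measure ℝ} {ν δ : ℝ} :
    IsNoncentralChiSq μ ν δ ↔ ∀ t : ℝ, t < 1 / 2 → ∫⁻ x, ENNReal.ofReal (exp (t * x)) ∂μ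
      = ENNReal.ofReal ((1 - 2 * t) ^ (-ν / 2) * exp (δ * t / (1 - 2 * t))) := by
  have hexp_nonneg : ∀ t : ℝ, 0 ≤ᵐ[μ] fun x => exp (t * x) :=
    fun t => ae_of_all _ fun x => (exp_pos _).le
  constructor
  · intro hμ t ht
    rw [← hμ.2 t ht, ofReal_integral_eq_lintegral_ofReal (hμ.integrable_exp_mul ht)
      (hexp_nonneg t)]
  · intro h
    refine ⟨⟨?_⟩, fun t ht => ?_⟩
    · simpa using h 0 (by norm_num)
    · have : 0 < 1 - 2 * t := by linarith
      rw [integral_eq_lintegral_of_nonneg_ae (hexp_nonneg t) (by fun_prop), h t ht,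
        toReal_ofReal (by positivity)]

lemma IsNoncentralChiSq.lintegral_exp_mul_bind {ν h δ : ℝ} (hh : 0 ≤ h) {μY : Measure ℝ}
    {κ : Kernel ℝ ℝ} (hY : IsNoncentralChiSq μY ν δ) (hY0 : ∀ᵐ y ∂μY, 0 ≤ y)
    (hκ : ∀ y : ℝ, 0 ≤ y → IsNoncentralChiSq (κ y) ν (y * h)) {t : ℝ} (ht : t < 1 / 2) :
    ∫⁻ x, ENNReal.ofReal (exp (t / (1 + h) * x)) ∂(μY.bind κ)
      = ENNReal.ofReal ((1 - 2 * t) ^ (-ν / 2) * exp (h * δ / (1 + h) * t / (1 - 2 * t))) := by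
  set s := t / (1 + h)
  have hst : s * (1 + h) = t := div_mul_cancel₀ t (by linarith)
  have hs : 0 < 1 - 2 * s := by nlinarith
  have ht' : 0 < 1 - 2 * t := by linarith
  set u := h * s / (1 - 2 * s)
  have hus : u * (1 - 2 * s) = h * s := div_mul_cancel₀ _ hs.ne'
  have hsu : (1 - 2 * s) * (1 - 2 * u) = 1 - 2 * t := by linear_combination (-2) * hus - 2 * hst
  have hu : 0 < 1 - 2 * u := pos_of_mul_pos_right (hsu ▸ ht') hs.le
  have hinner : ∀ᵐ y ∂μY, ∫⁻ x, ENNReal.ofReal (exp (s * x)) ∂(κ y)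
      = ENNReal.ofReal ((1 - 2 * s) ^ (-ν / 2)) * ENNReal.ofReal (exp (u * y)) := by
    filter_upwards [hY0] with y hy
    rw [isNoncentralChiSq_iff_lintegral_exp_mul.1 (hκ y hy) s (by linarith),
      ENNReal.ofReal_mul (by positivity)]
    congr 3
    ring
  have hexponent : δ * u / (1 - 2 * u) = h * δ / (1 + h) * t / (1 - 2 * t) := by
    rw [div_eq_div_iff hu.ne' ht'.ne', ← hsu, ← hst]
    field_simp
    linear_combination δ * (1 - 2 * u) * hus
  rw [Measure.lintegral_bind κ.measurable.aemeasurable (by fun_prop), lintegral_congr_ae hinner,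
    lintegral_const_mul _ (by fun_prop),
    isNoncentralChiSq_iff_lintegral_exp_mul.1 hY u (by linarith),
    ← ENNReal.ofReal_mul (by positivity), ← mul_assoc, ← mul_rpow hs.le hu.le, hsu, hexponent]

theorem noncentral_chi_sq_mixture (ν h δ : ℝ) (hν : 0 < ν) (hh : 0 < h) (hδ : 0 ≤ δ)
    (μY : Measure ℝ) (κ : Kernel ℝ ℝ)
    (hY : IsNoncentralChiSq μY ν δ)
    (hκ : ∀ y : ℝ, 0 ≤ y → IsNoncentralChiSq (κ y) ν (y * h)) :
    IsNoncentralChiSq ((μY.bind κ).map (fun x => x / (1 + h))) ν (h * δ / (1 + h)) := by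
  refine isNoncentralChiSq_iff_lintegral_exp_mul.2 fun t ht => ?_
  rw [lintegral_map (by fun_prop) (by fun_prop)]
  convert hY.lintegral_exp_mul_bind hh.le (hY.ae_nonneg hν.le hδ) hκ ht using 5
  ring
end

section
/- Let Σ, Δ, T, A be d×d real matrices such that I - 2TA and I - 2(I+Σ)TA are invertible, and set T̃ = TA(I - 2TA)⁻¹. Then tr(T̃ (I - 2ΣT̃)⁻¹ Δ) = tr(TA (I - 2(I+Σ)TA)⁻¹ Δ). -/
open Matrix

namespace Matrix

variable {n R : Type*} [Fintype n] [DecidableEq n] [CommRing R]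

theorem one_sub_mul_mul_nonsing_inv_eq (K S B : Matrix n n R) (h : IsUnit (1 - K * B)) :
    1 - K * S * (B * (1 - K * B)⁻¹) = (1 - K * (1 + S) * B) * (1 - K * B)⁻¹ := by
  have expand : (1 - K * (1 + S) * B) * (1 - K * B)⁻¹
      = (1 - K * B) * (1 - K * B)⁻¹ - K * S * (B * (1 - K * B)⁻¹) := by
    noncomm_ring
  rw [expand, mul_nonsing_inv _ ((isUnit_iff_isUnit_det _).mp h)]

theorem mul_nonsing_inv_mul_nonsing_inv_one_sub (K S B : Matrix n n R) (h : IsUnit (1 - K * B)) :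
    B * (1 - K * B)⁻¹ * (1 - K * S * (B * (1 - K * B)⁻¹))⁻¹ = B * (1 - K * (1 + S) * B)⁻¹ := by
  have hdet := (isUnit_iff_isUnit_det _).mp h
  rw [one_sub_mul_mul_nonsing_inv_eq K S B h, mul_inv_rev, nonsing_inv_nonsing_inv _ hdet,
    Matrix.mul_assoc B, ← Matrix.mul_assoc _ (1 - K * B), nonsing_inv_mul _ hdet, Matrix.one_mul]

end Matrix

theorem trace_collapse_general {d : ℕ} (Sig Δ T A : Matrix (Fin d) (Fin d) ℝ)
    (h1 : IsUnit (1 - 2 * T * A)) :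
    (T * A * (1 - 2 * T * A)⁻¹ *
        (1 - 2 * Sig * (T * A * (1 - 2 * T * A)⁻¹))⁻¹ * Δ).trace
      = (T * A * (1 - 2 * (1 + Sig) * T * A)⁻¹ * Δ).trace := by
  simp only [Matrix.mul_assoc 2 T A, Matrix.mul_assoc (2 * (1 + Sig)) T A] at h1 ⊢
  rw [mul_nonsing_inv_mul_nonsing_inv_one_sub 2 Sig (T * A) h1]

theorem trace_collapse {d : ℕ} (Sig Δ T A : Matrix (Fin d) (Fin d) ℝ)
    (h1 : IsUnit (1 - 2 * T * A)) (h2 : IsUnit (1 - 2 * (1 + Sig) * T * A)) :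
    (T * A * (1 - 2 * T * A)⁻¹ *
        (1 - 2 * Sig * (T * A * (1 - 2 * T * A)⁻¹))⁻¹ * Δ).trace
      = (T * A * (1 - 2 * (1 + Sig) * T * A)⁻¹ * Δ).trace :=
  trace_collapse_general Sig Δ T A h1
end
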